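/- arXiv:2305.00730 — 4 statements merged into one kernel-verified Lean document; each statement's English description precedes it below -/
import Mathlib

section
/- Let G = (V,E) be a finite simple graph and let f be a triple Roman dominating function of G of minimum weight (i.e., weight equal to the triple Roman domination number γ_3R(G)). Then there do not exist adjacent vertices v and u of G with f(v) = 1 and f(u) = 4. -/
open Finset

/-- A triple Roman dominating function on a finite simple graph `G`:
`f : V → {0,1,2,3,4}` such that
* if `f v = 0` then `v` has a neighbor with value `4`, or two distinct neighbors `u, w`
  with `f u ≥ 2` and `f w = 3`, or at least three neighbors assigned value `2`;
* if `f v = 1` then `v` has a neighbor with value `≥ 3` or at least two neighbors with value `2`;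
* if `f v = 2` then `v` has a neighbor with value `≥ 2`. -/
def Is3RDF {V : Type*} [Fintype V] (G : SimpleGraph V) [DecidableRel G.Adj]
    (f : V → ℕ) : Prop :=
  (∀ v, f v ≤ 4) ∧
  ∀ v : V,
    (f v = 0 →
      (∃ z, G.Adj v z ∧ f z = 4) ∨
      (∃ u w, u ≠ w ∧ G.Adj v u ∧ G.Adj v w ∧ 2 ≤ f u ∧ f w = 3) ∨
      3 ≤ ((G.neighborFinset v).filter (fun u => f u = 2)).card) ∧
    (f v = 1 →
      (∃ w, G.Adj v w ∧ 3 ≤ f w) ∨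
      2 ≤ ((G.neighborFinset v).filter (fun u => f u = 2)).card) ∧
    (f v = 2 → ∃ w, G.Adj v w ∧ 2 ≤ f w)

/-- The triple Roman domination number: the minimum weight `∑ v, f v` over all
triple Roman dominating functions of `G`. -/
noncomputable def gamma3R {V : Type*} [Fintype V] (G : SimpleGraph V)
    [DecidableRel G.Adj] : ℕ :=
  sInf {n | ∃ f : V → ℕ, Is3RDF G f ∧ ∑ v, f v = n}

/-! Lowering the value `1` at `v` to `0` gives a lighter triple Roman dominating function:
`v` itself is then dominated by its neighbour of value `4`, and no other vertex notices the change,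
since the conditions only ever look at neighbours of value at least `2`. So `f` was not minimal. -/

section LowerToZero

variable {V : Type*} [DecidableEq V] {f : V → ℕ} {v : V}

theorem update_zero_eq_iff_of_le_one (hv : f v ≤ 1) {n : ℕ} (hn : 2 ≤ n) (x : V) :
    Function.update f v 0 x = n ↔ f x = n := by
  rcases eq_or_ne x v with rfl | hx
  · simp only [Function.update_self]
    omega
  · rw [Function.update_of_ne hx]

theorem le_update_zero_iff_of_le_one (hv : f v ≤ 1) {n : ℕ} (hn : 2 ≤ n) (x : V) :
    n ≤ Function.update f v 0 x ↔ n ≤ f x := by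
  rcases eq_or_ne x v with rfl | hx
  · simp only [Function.update_self]
    omega
  · rw [Function.update_of_ne hx]

theorem sum_update_zero_add [Fintype V] (f : V → ℕ) (v : V) :
    ∑ x, Function.update f v 0 x + f v = ∑ x, f x := by
  rw [sum_update_of_mem (mem_univ v), sum_eq_add_sum_sdiff_singleton_of_mem (mem_univ v)]
  ring

end LowerToZero

namespace Is3RDF

variable {V : Type*} [Fintype V] {G : SimpleGraph V} [DecidableRel G.Adj] {f : V → ℕ}

theorem gamma3R_le (hf : Is3RDF G f) : gamma3R G ≤ ∑ v, f v :=
  Nat.sInf_le ⟨f, hf, rfl⟩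

theorem update_zero_of_adj [DecidableEq V] {v u : V} (hf : Is3RDF G f) (hv : f v ≤ 1)
    (hvu : G.Adj v u) (hu : f u = 4) : Is3RDF G (Function.update f v 0) := by
  have heq (n : ℕ) (hn : 2 ≤ n) := update_zero_eq_iff_of_le_one hv hn
  have hle (n : ℕ) (hn : 2 ≤ n) := le_update_zero_iff_of_le_one hv hn
  refine ⟨fun x => ?_, fun w => ?_⟩
  · rcases eq_or_ne x v with rfl | hx
    · simp
    · simpa [Function.update_of_ne hx] using hf.1 x
  rcases eq_or_ne w v with rfl | hw
  · simp only [Function.update_self]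
    exact ⟨fun _ => Or.inl ⟨u, hvu, (heq 4 (by norm_num) u).2 hu⟩, by simp, by simp⟩
  · simpa only [Function.update_of_ne hw, heq 2 le_rfl, heq 3 (by norm_num),
      heq 4 (by norm_num), hle 2 le_rfl, hle 3 (by norm_num)] using hf.2 w

end Is3RDF

/-- If `f` is a triple Roman dominating function of minimum weight
`γ_3R(G)`, then no two adjacent vertices `v, u` satisfy `f v = 1` and `f u = 4`. -/
theorem no_adjacent_one_four_in_min_3RDF {V : Type*} [Fintype V]
    (G : SimpleGraph V) [DecidableRel G.Adj] (f : V → ℕ)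
    (hf : Is3RDF G f) (hmin : ∑ v, f v = gamma3R G) :
    ¬ ∃ v u : V, G.Adj v u ∧ f v = 1 ∧ f u = 4 := by
  rintro ⟨v, u, hvu, hv, hu⟩
  classical
  have hlower := (hf.update_zero_of_adj hv.le hvu hu).gamma3R_le
  have hweight := sum_update_zero_add f v
  omega
end

section
/- Let G = (V,E) be a finite simple graph admitting a triple Roman dominating function. Then there exists a triple Roman dominating function f of G of minimum weight γ_3R(G) such that f(v) ≠ 1 for every vertex v; equivalently, the minimum weight over all triple Roman dominating functions taking values in {0,2,3,4} equals γ_3R(G). -/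
/-!
Take a 3RDF and a vertex `v` with `f v = 1`. Its condition gives a neighbour `w` with `f w ≥ 3`,
or two neighbours with value `2`, one of which we call `w`. Lowering `v` to `0` and raising `w`
by one (capped at `4`) does not increase the weight and is again a 3RDF: `v` is now protected
by a `4`, or by a `3` together with the other `2`; no other vertex loses protection, since a
value `1` never protects anything and raising a value `≥ 2` only ever strengthens a condition
(a `2` that becomes a `3` makes up for itself). Iterating removes every `1`, so starting from a
function of minimum weight gives the theorem.
-/

open Finset

open Function

theorem card_filter_eq_two_le_or_exists {V : Type*} {f g : V → ℕ}
    (hfg : ∀ y, f y = 2 → 2 ≤ g y) (s : Finset V) :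
    #(s.filter (fun u => f u = 2)) ≤ #(s.filter (fun u => g u = 2)) ∨
      ∃ y ∈ s, f y = 2 ∧ 3 ≤ g y := by
  by_cases hraised : ∃ y ∈ s, f y = 2 ∧ 3 ≤ g y
  · exact Or.inr hraised
  push Not at hraised
  refine Or.inl (card_le_card fun y hy => ?_)
  rw [mem_filter] at hy ⊢
  have := hfg y hy.2
  have := hraised y hy.1 hy.2
  exact ⟨hy.1, by omega⟩

section Is3RDFAt
variable {V : Type*} [Fintype V] (G : SimpleGraph V) [DecidableRel G.Adj]

def Is3RDFAt (f : V → ℕ) (v : V) : Prop :=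
  (f v = 0 →
    (∃ z, G.Adj v z ∧ f z = 4) ∨
    (∃ u w, u ≠ w ∧ G.Adj v u ∧ G.Adj v w ∧ 2 ≤ f u ∧ f w = 3) ∨
    3 ≤ #((G.neighborFinset v).filter (fun u => f u = 2))) ∧
  (f v = 1 →
    (∃ w, G.Adj v w ∧ 3 ≤ f w) ∨
    2 ≤ #((G.neighborFinset v).filter (fun u => f u = 2))) ∧
  (f v = 2 → ∃ w, G.Adj v w ∧ 2 ≤ f w)

theorem is3RDF_iff {f : V → ℕ} : Is3RDF G f ↔ (∀ v, f v ≤ 4) ∧ ∀ v, Is3RDFAt G f v :=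
  Iff.rfl

variable {G} {f : V → ℕ} {v : V}

theorem Is3RDFAt.of_three_le (h : 3 ≤ f v) : Is3RDFAt G f v :=
  ⟨by omega, by omega, by omega⟩

theorem Is3RDFAt.of_adj_four (h0 : f v = 0) {z : V} (hz : G.Adj v z) (hz4 : f z = 4) :
    Is3RDFAt G f v :=
  ⟨fun _ => Or.inl ⟨z, hz, hz4⟩, by omega, by omega⟩

theorem Is3RDFAt.of_adj_two_three (h0 : f v = 0) {u w : V} (huw : u ≠ w) (hu : G.Adj v u)
    (hw : G.Adj v w) (hu2 : 2 ≤ f u) (hw3 : f w = 3) : Is3RDFAt G f v :=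
  ⟨fun _ => Or.inr (Or.inl ⟨u, w, huw, hu, hw, hu2, hw3⟩), by omega, by omega⟩

theorem Is3RDFAt.mono {g : V → ℕ} {x : V} (hf : Is3RDFAt G f x) (hx : g x = f x)
    (hg : ∀ y, g y ≤ 4) (hfg : ∀ y, 2 ≤ f y → f y ≤ g y) : Is3RDFAt G g x := by
  have hfg2 : ∀ y, f y = 2 → 2 ≤ g y := fun y hy => hy ▸ hfg y hy.ge
  have hfg3 : ∀ y, f y = 3 → g y = 3 ∨ g y = 4 := fun y hy => by
    have := hfg y (by omega); have := hg y; omega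
  obtain ⟨h0, h1, h2⟩ := hf
  rw [← hx] at h0 h1 h2
  refine ⟨fun hx0 => ?_, fun hx1 => ?_, fun hx2 => ?_⟩
  · rcases h0 hx0 with ⟨z, hz, hz4⟩ | ⟨u, w, huw, hu, hw, hu2, hw3⟩ | hcard
    · exact Or.inl ⟨z, hz, le_antisymm (hg z) (hz4 ▸ hfg z (by omega))⟩
    · rcases hfg3 w hw3 with hw3' | hw4
      · exact Or.inr (Or.inl ⟨u, w, huw, hu, hw, (hfg u hu2).trans' hu2, hw3'⟩)
      · exact Or.inl ⟨w, hw, hw4⟩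
    rcases card_filter_eq_two_le_or_exists hfg2 (G.neighborFinset x) with hle | ⟨y, hy, hy2, hy3⟩
    · exact Or.inr (Or.inr (hcard.trans hle))
    rw [SimpleGraph.mem_neighborFinset] at hy
    rcases (by have := hg y; omega : g y = 3 ∨ g y = 4) with hy3' | hy4
    · -- a `2` raised to `3` pairs with any other of the three `2`s
      obtain ⟨u, hu, huy⟩ := exists_mem_ne (by omega : 1 < #((G.neighborFinset x).filter
        (fun u => f u = 2))) y
      simp only [mem_filter, SimpleGraph.mem_neighborFinset] at hu
      exact Or.inr (Or.inl ⟨u, y, huy, hu.1, hy, hfg2 u hu.2, hy3'⟩)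
    · exact Or.inl ⟨y, hy, hy4⟩
  · rcases h1 hx1 with ⟨w, hw, hw3⟩ | hcard
    · exact Or.inl ⟨w, hw, hw3.trans (hfg w (by omega))⟩
    rcases card_filter_eq_two_le_or_exists hfg2 (G.neighborFinset x) with hle | ⟨y, hy, -, hy3⟩
    · exact Or.inr (hcard.trans hle)
    · exact Or.inl ⟨y, (G.mem_neighborFinset x y).mp hy, hy3⟩
  · obtain ⟨w, hw, hw2⟩ := h2 hx2
    exact ⟨w, hw, hw2.trans (hfg w hw2)⟩

end Is3RDFAt

section TransferUnit
variable {V : Type*} [DecidableEq V]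

def transferUnit (f : V → ℕ) (v w : V) : V → ℕ :=
  update (update f v 0) w (min (f w + 1) 4)

variable {f : V → ℕ} {v w : V}

theorem transferUnit_apply_of_ne {x : V} (hv : x ≠ v) (hw : x ≠ w) :
    transferUnit f v w x = f x := by
  simp [transferUnit, hv, hw]

theorem transferUnit_apply_left (hvw : v ≠ w) : transferUnit f v w v = 0 := by
  simp [transferUnit, hvw]

theorem transferUnit_apply_right : transferUnit f v w w = min (f w + 1) 4 := by
  simp [transferUnit]

variable [Fintype V]

theorem sum_update_add (f : V → ℕ) (i : V) (b : ℕ) :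
    ∑ x, update f i b x + f i = ∑ x, f x + b := by
  rw [sum_update_of_mem (mem_univ i), ← add_sum_erase univ f (mem_univ i),
    sdiff_singleton_eq_erase]
  ring

theorem sum_transferUnit_le (hv : 1 ≤ f v) (hvw : v ≠ w) :
    ∑ x, transferUnit f v w x ≤ ∑ x, f x := by
  have hw := sum_update_add (update f v 0) w (min (f w + 1) 4)
  have hv := sum_update_add f v 0
  rw [update_of_ne hvw.symm] at hw
  rw [transferUnit]
  omega

theorem card_eq_one_transferUnit_lt (hv : f v = 1) (hw : 2 ≤ f w) (hvw : v ≠ w) :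
    #{x | transferUnit f v w x = 1} < #{x | f x = 1} := by
  refine card_lt_card ⟨fun x hx => ?_, fun hsub => ?_⟩
  · rw [mem_filter] at hx ⊢
    refine ⟨mem_univ x, ?_⟩
    by_cases hxv : x = v
    · rw [hxv, transferUnit_apply_left hvw] at hx; omega
    by_cases hxw : x = w
    · rw [hxw, transferUnit_apply_right] at hx; omega
    rw [← transferUnit_apply_of_ne (f := f) hxv hxw]
    exact hx.2
  · have := (mem_filter.mp (hsub (mem_filter.mpr ⟨mem_univ v, hv⟩))).2
    rw [transferUnit_apply_left hvw] at this
    omega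

end TransferUnit

section Transfer
variable {V : Type*} [Fintype V] [DecidableEq V] {G : SimpleGraph V} [DecidableRel G.Adj]
  {f : V → ℕ} {v w : V}

theorem is3RDF_transferUnit (hf : Is3RDF G f) (hv : f v = 1) (hvw : G.Adj v w) (hw : 2 ≤ f w)
    (hvg : Is3RDFAt G (transferUnit f v w) v) : Is3RDF G (transferUnit f v w) := by
  have hbound : ∀ y, transferUnit f v w y ≤ 4 := fun y => by
    by_cases hyv : y = v
    · rw [hyv, transferUnit_apply_left hvw.ne]; omega
    by_cases hyw : y = w
    · rw [hyw, transferUnit_apply_right]; omega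
    rw [transferUnit_apply_of_ne hyv hyw]; exact hf.1 y
  refine (is3RDF_iff G).2 ⟨hbound, fun x => ?_⟩
  by_cases hxw : x = w
  · subst hxw
    exact Is3RDFAt.of_three_le (by rw [transferUnit_apply_right]; omega)
  by_cases hxv : x = v
  · exact hxv ▸ hvg
  refine Is3RDFAt.mono (hf.2 x) (transferUnit_apply_of_ne hxv hxw) hbound fun y hy => ?_
  by_cases hyw : y = w
  · rw [hyw, transferUnit_apply_right]; have := hf.1 w; omega
  have hyv : y ≠ v := by rintro rfl; omega
  rw [transferUnit_apply_of_ne hyv hyw]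

end Transfer

section Avoiding
variable {V : Type*} [Fintype V] {G : SimpleGraph V} [DecidableRel G.Adj] {f : V → ℕ}

theorem Is3RDF.exists_card_eq_one_lt (hf : Is3RDF G f) {v : V} (hv : f v = 1) :
    ∃ g, Is3RDF G g ∧ ∑ x, g x ≤ ∑ x, f x ∧ #{x | g x = 1} < #{x | f x = 1} := by
  classical
  suffices ∃ w, G.Adj v w ∧ 2 ≤ f w ∧ Is3RDFAt G (transferUnit f v w) v by
    obtain ⟨w, hvw, hw, hvg⟩ := this
    exact ⟨_, is3RDF_transferUnit hf hv hvw hw hvg, sum_transferUnit_le hv.ge hvw.ne,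
      card_eq_one_transferUnit_lt hv hw hvw.ne⟩
  rcases (hf.2 v).2.1 hv with ⟨w, hvw, hw3⟩ | hcard
  · refine ⟨w, hvw, by omega, .of_adj_four (transferUnit_apply_left hvw.ne) hvw ?_⟩
    rw [transferUnit_apply_right]; have := hf.1 w; omega
  obtain ⟨u, hu, w, hw, huw⟩ := one_lt_card.mp hcard
  simp only [mem_filter, SimpleGraph.mem_neighborFinset] at hu hw
  refine ⟨u, hu.1, hu.2.ge, .of_adj_two_three (transferUnit_apply_left hu.1.ne) huw.symm hw.1 hu.1
    ?_ ?_⟩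
  · rw [transferUnit_apply_of_ne hw.1.ne' huw.symm, hw.2]
  · rw [transferUnit_apply_right, hu.2]
    rfl

theorem Is3RDF.exists_forall_ne_one_sum_le (hf : Is3RDF G f) :
    ∃ g, Is3RDF G g ∧ (∀ v, g v ≠ 1) ∧ ∑ x, g x ≤ ∑ x, f x := by
  induction hn : #{x | f x = 1} using Nat.strong_induction_on generalizing f with
  | _ n ih =>
  by_cases hone : ∀ v, f v ≠ 1
  · exact ⟨f, hf, hone, le_rfl⟩
  push Not at hone
  obtain ⟨v, hv⟩ := hone
  obtain ⟨g, hg, hgf, hcard⟩ := hf.exists_card_eq_one_lt hv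
  obtain ⟨g', hg', hg'1, hg'g⟩ := ih _ (hn ▸ hcard) hg rfl
  exact ⟨g', hg', hg'1, hg'g.trans hgf⟩

end Avoiding

/-- If `G` admits a 3RDF, then there is a 3RDF of minimum weight
`γ_3R(G)` never taking the value `1`. -/
theorem exists_min_3RDF_avoiding_one {V : Type*} [Fintype V]
    (G : SimpleGraph V) [DecidableRel G.Adj]
    (h : ∃ g : V → ℕ, Is3RDF G g) :
    ∃ f : V → ℕ, Is3RDF G f ∧ (∀ v, f v ≠ 1) ∧ ∑ v, f v = gamma3R G := by
  obtain ⟨g, hg⟩ := h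
  obtain ⟨f, hf, hsum⟩ : ∃ f : V → ℕ, Is3RDF G f ∧ ∑ v, f v = gamma3R G :=
    Nat.sInf_mem (s := {n | ∃ f : V → ℕ, Is3RDF G f ∧ ∑ v, f v = n}) ⟨_, g, hg, rfl⟩
  obtain ⟨f', hf', hf'1, hle⟩ := hf.exists_forall_ne_one_sum_le
  exact ⟨f', hf', hf'1, le_antisymm (hsum ▸ hle) (Nat.sInf_le ⟨f', hf', rfl⟩)⟩
end

section
/- Let G = (V,E) be a finite simple graph, let f be a triple Roman dominating function of G, and let v be a vertex with f(v) = 1 having two distinct neighbors u and w with f(u) = 2 and f(w) = 2. Define g by g(v) = 0, g(u) = 3, and g(x) = f(x) for all other vertices x. Then g is a triple Roman dominating function of G with the same weight as f. -/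
open Finset

/-! Raising `u` from 2 to 3 keeps `f` a 3RDF: a vertex that counted `u` among its neighbours of
value 2 now sees `u` with value 3 together with another neighbour of value 2. The conditions only
look at neighbours of value at least 2, so a vertex of value 1 is invisible to them and `v` may
drop to 0, being dominated by `w` (value 2) and `u` (value 3). -/

open Function

theorem Finset.sum_update_add_of_mem {ι M : Type*} [AddCommMonoid M] [DecidableEq ι]
    {s : Finset ι} {i : ι} (h : i ∈ s) (f : ι → M) (b : M) :
    ∑ x ∈ s, update f i b x + f i = ∑ x ∈ s, f x + b := by
  rw [sum_update_of_mem h, sum_eq_add_sum_sdiff_singleton_of_mem h]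
  abel

namespace Is3RDF

variable {V : Type*} [Fintype V] [DecidableEq V] {G : SimpleGraph V} [DecidableRel G.Adj]
  {f : V → ℕ}

theorem update_three_of_eq_two (hf : Is3RDF G f) {u : V} (hu : f u = 2) :
    Is3RDF G (update f u 3) := by
  obtain ⟨hbound, hcond⟩ := hf
  set g := update f u 3
  have hgu : g u = 3 := update_self u 3 f
  have hgo : ∀ y, y ≠ u → g y = f y := fun y hy => update_of_ne hy 3 f
  have hfix : ∀ y, f y ≠ 2 → g y = f y := fun y hy => hgo y (by rintro rfl; exact hy hu)
  have hle : ∀ y, f y ≤ g y := fun y => by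
    obtain rfl | hy := eq_or_ne y u
    · omega
    · rw [hgo y hy]
  have htwos : ∀ s : Finset V, s.filter (g · = 2) = (s.filter (f · = 2)).erase u := by
    intro s
    ext y
    obtain rfl | hy := eq_or_ne y u
    · simp [hgu]
    · simp [hy, hgo y hy]
  refine ⟨fun y => ?_, fun x => ?_⟩
  · obtain rfl | hy := eq_or_ne y u
    · omega
    · rw [hgo y hy]; exact hbound y
  obtain rfl | hxu := eq_or_ne x u
  · simp [hgu]
  rw [hgo x hxu]
  obtain ⟨h0, h1, h2⟩ := hcond x
  refine ⟨fun hx => ?_, fun hx => ?_, fun hx => ?_⟩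
  · rcases h0 hx with ⟨z, hxz, hz⟩ | ⟨a, b, hab, hxa, hxb, ha, hb⟩ | hcard
    · exact Or.inl ⟨z, hxz, by rw [hfix z (by omega), hz]⟩
    · refine Or.inr <| Or.inl ⟨a, b, hab, hxa, hxb, ha.trans (hle a), ?_⟩
      rw [hfix b (by omega), hb]
    by_cases hxu : u ∈ (G.neighborFinset x).filter (f · = 2)
    · obtain ⟨a, ha, hau⟩ := exists_mem_ne (lt_of_lt_of_le (by norm_num) hcard) u
      rw [mem_filter, SimpleGraph.mem_neighborFinset] at ha hxu
      exact Or.inr <| Or.inl ⟨a, u, hau, ha.1, hxu.1, by rw [hgo a hau, ha.2], hgu⟩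
    · exact Or.inr <| Or.inr <| by rwa [htwos, erase_eq_of_notMem hxu]
  · rcases h1 hx with ⟨z, hxz, hz⟩ | hcard
    · exact Or.inl ⟨z, hxz, hz.trans (hle z)⟩
    by_cases hxu : u ∈ (G.neighborFinset x).filter (f · = 2)
    · rw [mem_filter, SimpleGraph.mem_neighborFinset] at hxu
      exact Or.inl ⟨u, hxu.1, hgu.ge⟩
    · exact Or.inr <| by rwa [htwos, erase_eq_of_notMem hxu]
  · obtain ⟨z, hxz, hz⟩ := h2 hx
    exact ⟨z, hxz, hz.trans (hle z)⟩

theorem update_zero_of_eq_one (hf : Is3RDF G f) {v u w : V} (hv : f v = 1) (huw : u ≠ w)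
    (hvu : G.Adj v u) (hvw : G.Adj v w) (hu : 2 ≤ f u) (hw : f w = 3) :
    Is3RDF G (update f v 0) := by
  obtain ⟨hbound, hcond⟩ := hf
  set g := update f v 0
  have hgv : g v = 0 := update_self v 0 f
  have hgo : ∀ y, y ≠ v → g y = f y := fun y hy => update_of_ne hy 0 f
  have hfix : ∀ y, 2 ≤ f y → g y = f y := fun y hy => hgo y (by rintro rfl; omega)
  have htwos : ∀ s : Finset V, s.filter (g · = 2) = s.filter (f · = 2) := by
    intro s
    refine filter_congr fun y _ => ?_
    obtain rfl | hy := eq_or_ne y v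
    · simp [hgv, hv]
    · rw [hgo y hy]
  refine ⟨fun y => ?_, fun x => ?_⟩
  · obtain rfl | hy := eq_or_ne y v
    · omega
    · rw [hgo y hy]; exact hbound y
  obtain rfl | hxv := eq_or_ne x v
  · rw [hgv]
    refine ⟨fun _ => Or.inr <| Or.inl ⟨u, w, huw, hvu, hvw, ?_, ?_⟩, by simp, by simp⟩
    · rwa [hfix u hu]
    · rw [hfix w (by omega), hw]
  rw [hgo x hxv, htwos]
  obtain ⟨h0, h1, h2⟩ := hcond x
  refine ⟨fun hx => ?_, fun hx => ?_, fun hx => ?_⟩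
  · rcases h0 hx with ⟨z, hxz, hz⟩ | ⟨a, b, hab, hxa, hxb, ha, hb⟩ | hcard
    · exact Or.inl ⟨z, hxz, by rw [hfix z (by omega), hz]⟩
    · refine Or.inr <| Or.inl ⟨a, b, hab, hxa, hxb, by rwa [hfix a ha], ?_⟩
      rw [hfix b (by omega), hb]
    · exact Or.inr <| Or.inr hcard
  · exact (h1 hx).imp_left fun ⟨z, hxz, hz⟩ => ⟨z, hxz, by rwa [hfix z (by omega)]⟩
  · obtain ⟨z, hxz, hz⟩ := h2 hx
    exact ⟨z, hxz, by rwa [hfix z hz]⟩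

end Is3RDF

/-- If `f` is a 3RDF, `f v = 1`, and `v` has distinct neighbors `u, w`
with `f u = f w = 2`, then `g` with `g v = 0`, `g u = 3`, and `g = f` elsewhere is a
3RDF of the same weight. -/
theorem swap_one_two_to_zero_three_is_3RDF {V : Type*} [Fintype V] [DecidableEq V]
    (G : SimpleGraph V) [DecidableRel G.Adj] (f : V → ℕ) (hf : Is3RDF G f)
    (v u w : V) (huw : u ≠ w) (hvu : G.Adj v u) (hvw : G.Adj v w)
    (hv : f v = 1) (hu : f u = 2) (hw : f w = 2) :
    Is3RDF G (Function.update (Function.update f v 0) u 3) ∧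
      ∑ x, Function.update (Function.update f v 0) u 3 x = ∑ x, f x := by
  constructor
  · rw [update_comm hvu.ne]
    refine (hf.update_three_of_eq_two hu).update_zero_of_eq_one ?_ huw.symm hvw hvu ?_
      (update_self u 3 f)
    · rwa [update_of_ne hvu.ne]
    · rw [update_of_ne huw.symm, hw]
  · have hraise := sum_update_add_of_mem (mem_univ u) (update f v 0) 3
    have hlower := sum_update_add_of_mem (mem_univ v) f 0
    rw [update_of_ne hvu.ne.symm, hu] at hraise
    omega
end

section
/- Let G = (V,E) be a finite simple graph, let f be a quadruple Roman dominating function of G, and let v be a vertex with f(v) = 1 having a neighbor u with f(u) = 4. Define g by g(v) = 0, g(u) = 5, and g(x) = f(x) for all other vertices x. Then g is a quadruple Roman dominating function of G with the same weight as f. -/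
open Finset

/-- A quadruple Roman dominating function on a finite simple graph `G`:
`f : V → {0,1,2,3,4,5}` such that
* if `f v = 0` then `v` has a neighbor with value `5`, or two distinct neighbors `u, w`
  with `f u = 4` and `f w ≥ 2`, or at least two neighbors with value `≥ 3`, or at least
  four neighbors with value `2`, or two neighbors with value `2` and one with value `3`;
* if `f v = 1` then `v` has a neighbor with value `≥ 4`, or two distinct neighbors `u, w`
  with `f u = 3` and `f w ≥ 2`, or at least three neighbors with value `2`;
* if `f v = 2` then `v` has a neighbor with value `≥ 3` or at least two neighbors with
  value `2`;
* if `f v = 3` then `v` has a neighbor with value `≥ 2`. -/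
def Is4RDF {V : Type*} [Fintype V] (G : SimpleGraph V) [DecidableRel G.Adj]
    (f : V → ℕ) : Prop :=
  (∀ v, f v ≤ 5) ∧
  ∀ v : V,
    (f v = 0 →
      (∃ u, G.Adj v u ∧ f u = 5) ∨
      (∃ u w, u ≠ w ∧ G.Adj v u ∧ G.Adj v w ∧ f u = 4 ∧ 2 ≤ f w) ∨
      2 ≤ ((G.neighborFinset v).filter (fun u => 3 ≤ f u)).card ∨
      4 ≤ ((G.neighborFinset v).filter (fun u => f u = 2)).card ∨
      (2 ≤ ((G.neighborFinset v).filter (fun u => f u = 2)).card ∧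
        1 ≤ ((G.neighborFinset v).filter (fun u => f u = 3)).card)) ∧
    (f v = 1 →
      (∃ u, G.Adj v u ∧ 4 ≤ f u) ∨
      (∃ u w, u ≠ w ∧ G.Adj v u ∧ G.Adj v w ∧ f u = 3 ∧ 2 ≤ f w) ∨
      3 ≤ ((G.neighborFinset v).filter (fun u => f u = 2)).card) ∧
    (f v = 2 →
      (∃ u, G.Adj v u ∧ 3 ≤ f u) ∨
      2 ≤ ((G.neighborFinset v).filter (fun u => f u = 2)).card) ∧
    (f v = 3 → ∃ u, G.Adj v u ∧ 2 ≤ f u)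

/-- The quadruple Roman domination number: the minimum weight `∑ v, f v` over all
quadruple Roman dominating functions of `G`. -/
noncomputable def gamma4R {V : Type*} [Fintype V] (G : SimpleGraph V)
    [DecidableRel G.Adj] : ℕ :=
  sInf {n | ∃ f : V → ℕ, Is4RDF G f ∧ ∑ v, f v = n}

/-!
Raising `u` from `4` to `5` and lowering `v` from `1` to `0` moves no vertex across any of the
thresholds `2`, `3`, `4` that the neighbourhood conditions of a 4RDF test, apart from the
conditions `= 4` and `= 5`, which only get easier to meet. So every vertex other than `u` and `v`
stays dominated, `v` is now dominated by its neighbour `u` of value `5`, and `u` (value `5`) needs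
nothing. The weight changes by `+1 - 1`.
-/

def Is4RDFAt {V : Type*} [Fintype V] (G : SimpleGraph V) [DecidableRel G.Adj]
    (f : V → ℕ) (v : V) : Prop :=
  (f v = 0 →
    (∃ u, G.Adj v u ∧ f u = 5) ∨
    (∃ u w, u ≠ w ∧ G.Adj v u ∧ G.Adj v w ∧ f u = 4 ∧ 2 ≤ f w) ∨
    2 ≤ ((G.neighborFinset v).filter (fun u => 3 ≤ f u)).card ∨
    4 ≤ ((G.neighborFinset v).filter (fun u => f u = 2)).card ∨
    (2 ≤ ((G.neighborFinset v).filter (fun u => f u = 2)).card ∧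
      1 ≤ ((G.neighborFinset v).filter (fun u => f u = 3)).card)) ∧
  (f v = 1 →
    (∃ u, G.Adj v u ∧ 4 ≤ f u) ∨
    (∃ u w, u ≠ w ∧ G.Adj v u ∧ G.Adj v w ∧ f u = 3 ∧ 2 ≤ f w) ∨
    3 ≤ ((G.neighborFinset v).filter (fun u => f u = 2)).card) ∧
  (f v = 2 →
    (∃ u, G.Adj v u ∧ 3 ≤ f u) ∨
    2 ≤ ((G.neighborFinset v).filter (fun u => f u = 2)).card) ∧
  (f v = 3 → ∃ u, G.Adj v u ∧ 2 ≤ f u)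

section Thresholds

variable {V : Type*} [Fintype V] {G : SimpleGraph V} [DecidableRel G.Adj] {f g : V → ℕ}

theorem is4RDFAt_of_five {x : V} (hx : g x = 5) : Is4RDFAt G g x := by
  simp only [Is4RDFAt, hx]
  omega

theorem Is4RDFAt.of_thresholds {x : V} (hfx : Is4RDFAt G f x) (hx : g x = f x)
    (hg : ∀ y, g y ≤ 5) (hthr : ∀ y k, 2 ≤ k → k ≤ 4 → (k ≤ g y ↔ k ≤ f y))
    (hfive : ∀ y, f y = 5 → g y = 5) : Is4RDFAt G g x := by
  have ge2 (y : V) : 2 ≤ g y ↔ 2 ≤ f y := hthr y 2 le_rfl (by norm_num)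
  have ge3 (y : V) : 3 ≤ g y ↔ 3 ≤ f y := hthr y 3 (by norm_num) (by norm_num)
  have ge4 (y : V) : 4 ≤ g y ↔ 4 ≤ f y := hthr y 4 (by norm_num) le_rfl
  have eq2 (y : V) : g y = 2 ↔ f y = 2 := by have := ge2 y; have := ge3 y; omega
  have eq3 (y : V) : g y = 3 ↔ f y = 3 := by have := ge3 y; have := ge4 y; omega
  have card_eq (p : ℕ → Prop) [DecidablePred p] (hp : ∀ y, p (g y) ↔ p (f y)) :
      ((G.neighborFinset x).filter (fun y => p (g y))).card =
        ((G.neighborFinset x).filter (fun y => p (f y))).card := by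
    rw [filter_congr fun y _ => hp y]
  obtain ⟨h0, h1, h2, h3⟩ := hfx
  rw [Is4RDFAt, hx, card_eq (3 ≤ ·) ge3, card_eq (· = 2) eq2, card_eq (· = 3) eq3]
  refine ⟨fun hx0 => ?_, fun hx1 => ?_, fun hx2 => ?_, fun hx3 => ?_⟩
  · rcases h0 hx0 with ⟨w, hxw, hw⟩ | ⟨a, b, hab, hxa, hxb, ha, hb⟩ | hc | hc | hc
    · exact Or.inl ⟨w, hxw, hfive w hw⟩
    · have ha' : 4 ≤ g a := (ge4 a).mpr ha.ge
      rcases (show g a = 4 ∨ g a = 5 by have := hg a; omega) with ha4 | ha5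
      · exact Or.inr <| Or.inl ⟨a, b, hab, hxa, hxb, ha4, (ge2 b).mpr hb⟩
      · exact Or.inl ⟨a, hxa, ha5⟩
    · exact Or.inr <| Or.inr <| Or.inl hc
    · exact Or.inr <| Or.inr <| Or.inr <| Or.inl hc
    · exact Or.inr <| Or.inr <| Or.inr <| Or.inr hc
  · rcases h1 hx1 with ⟨w, hxw, hw⟩ | ⟨a, b, hab, hxa, hxb, ha, hb⟩ | hc
    · exact Or.inl ⟨w, hxw, (ge4 w).mpr hw⟩
    · exact Or.inr <| Or.inl ⟨a, b, hab, hxa, hxb, (eq3 a).mpr ha, (ge2 b).mpr hb⟩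
    · exact Or.inr <| Or.inr hc
  · rcases h2 hx2 with ⟨w, hxw, hw⟩ | hc
    · exact Or.inl ⟨w, hxw, (ge3 w).mpr hw⟩
    · exact Or.inr hc
  · obtain ⟨w, hxw, hw⟩ := h3 hx3
    exact ⟨w, hxw, (ge2 w).mpr hw⟩

theorem Is4RDF.of_thresholds (hf : Is4RDF G f) (hg : ∀ y, g y ≤ 5)
    (hthr : ∀ y k, 2 ≤ k → k ≤ 4 → (k ≤ g y ↔ k ≤ f y)) (hfive : ∀ y, f y = 5 → g y = 5)
    (hchanged : ∀ x, g x ≠ f x → Is4RDFAt G g x) : Is4RDF G g := by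
  refine ⟨hg, fun x => ?_⟩
  by_cases hx : g x = f x
  · exact Is4RDFAt.of_thresholds (hf.2 x) hx hg hthr hfive
  · exact hchanged x hx

end Thresholds

theorem Fintype.sum_update_add {ι M : Type*} [Fintype ι] [DecidableEq ι] [AddCommMonoid M]
    (f : ι → M) (a : ι) (b : M) :
    ∑ x, Function.update f a b x + f a = ∑ x, f x + b := by
  rw [sum_update_of_mem (mem_univ a), Fintype.sum_eq_sum_compl_add a, compl_eq_univ_sdiff]
  abel

/-- If `f` is a 4RDF, `f v = 1`, and `v` has a neighbor `u` with
`f u = 4`, then `g` with `g v = 0`, `g u = 5`, and `g = f` elsewhere is a 4RDF of the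
same weight. -/
theorem swap_one_four_to_zero_five_is_4RDF {V : Type*} [Fintype V] [DecidableEq V]
    (G : SimpleGraph V) [DecidableRel G.Adj] (f : V → ℕ) (hf : Is4RDF G f)
    (v u : V) (hvu : G.Adj v u) (hv : f v = 1) (hu : f u = 4) :
    Is4RDF G (Function.update (Function.update f v 0) u 5) ∧
      ∑ x, Function.update (Function.update f v 0) u 5 x = ∑ x, f x := by
  have huv : u ≠ v := hvu.ne.symm
  have hweight : ∑ x, Function.update (Function.update f v 0) u 5 x = ∑ x, f x := by
    have hraise := Fintype.sum_update_add (Function.update f v 0) u 5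
    have hlower := Fintype.sum_update_add f v 0
    rw [Function.update_of_ne huv, hu] at hraise
    omega
  set g := Function.update (Function.update f v 0) u 5
  have hgu : g u = 5 := by simp [g]
  have hgv : g v = 0 := by simp [g, huv.symm]
  have hgx (x : V) (hxu : x ≠ u) (hxv : x ≠ v) : g x = f x := by simp [g, hxu, hxv]
  refine ⟨hf.of_thresholds ?_ ?_ ?_ ?_, hweight⟩
  · intro y
    by_cases hyu : y = u; · simp [hyu, hgu]
    by_cases hyv : y = v; · simp [hyv, hgv]
    exact hgx y hyu hyv ▸ hf.1 y
  · intro y k hk₂ hk₄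
    by_cases hyu : y = u; · subst hyu; omega
    by_cases hyv : y = v; · subst hyv; omega
    rw [hgx y hyu hyv]
  · intro y hy
    rw [hgx y (by rintro rfl; omega) (by rintro rfl; omega), hy]
  · intro x hx
    by_cases hxu : x = u; · exact hxu ▸ is4RDFAt_of_five hgu
    by_cases hxv : x = v
    · subst hxv
      refine ⟨fun _ => Or.inl ⟨u, hvu, hgu⟩, fun h => ?_, fun h => ?_, fun h => ?_⟩ <;> omega
    exact absurd (hgx x hxu hxv) hx
end
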